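/- Let A be a Z-graded ring such that A^{≥0} admits a regular sequence (r, r̃) of central homogeneous elements of positive degree. Then A ≅ A^{≥0} ⊕ A^{<0} as A^{≥0}-bimodules, with A^{<0} an A^{≥0}-subbimodule that is also a quotient bimodule. -/

import Mathlib

/-!
The additive splitting `A = A^{≥0} ⊕ A^{<0}` holds in any `ℤ`-graded ring; the content is that
`r` kills every homogeneous `b` of negative degree `j` after finitely many steps. Take the
first `p` with `u := r ^ p * b` of degree `e ≥ 0`, so that `e < deg r`. For `q = -j` the element
`r̃ ^ q * u = r * (r ^ (p - 1) * r̃ ^ q * b)` lies in `r A^{≥0}` (as `deg r̃ ≥ 1`), and peeling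
off the factors `r̃` one at a time by regularity of `r̃` modulo `r` gives `u ∈ r A^{≥0}`. This
forces `u = 0`, since `r A^{≥0}` has no component in degrees below `deg r`. So if `a` is
homogeneous with `deg a + j ≥ 0`, a power of `r` annihilates `a * b` and `b * a`, which lie in
`A^{≥0}`, where `r` is regular: both products vanish.
-/

/-- The subgroup of `A` of elements supported in degrees belonging to `S`. -/
def gradedPart {A : Type} [Ring A] (𝒜 : ℤ → AddSubgroup A) (S : Set ℤ) : AddSubgroup A :=
  ⨆ i ∈ S, 𝒜 i

open DirectSum

section GradedPart

variable {A : Type} [Ring A] (𝒜 : ℤ → AddSubgroup A)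

lemma mem_gradedPart_of_mem {S : Set ℤ} {i : ℤ} (hi : i ∈ S) {x : A} (hx : x ∈ 𝒜 i) :
    x ∈ gradedPart 𝒜 S :=
  le_iSup₂ (f := fun i (_ : i ∈ S) => 𝒜 i) i hi hx

lemma mem_gradedPart_nonneg {i : ℤ} (hi : 0 ≤ i) {x : A} (hx : x ∈ 𝒜 i) :
    x ∈ gradedPart 𝒜 {i | 0 ≤ i} :=
  mem_gradedPart_of_mem 𝒜 (S := {i | 0 ≤ i}) hi hx

lemma mul_mem_gradedPart {S T U : Set ℤ}
    (h : ∀ i ∈ S, ∀ j ∈ T, ∀ x ∈ 𝒜 i, ∀ y ∈ 𝒜 j, x * y ∈ gradedPart 𝒜 U)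
    {x y : A} (hx : x ∈ gradedPart 𝒜 S) (hy : y ∈ gradedPart 𝒜 T) :
    x * y ∈ gradedPart 𝒜 U := by
  suffices gradedPart 𝒜 S ≤ (gradedPart 𝒜 U).comap (AddMonoidHom.mulRight y) from this hx
  refine iSup₂_le fun i hi x hx => ?_
  suffices gradedPart 𝒜 T ≤ (gradedPart 𝒜 U).comap (AddMonoidHom.mulLeft x) from this hy
  exact iSup₂_le fun j hj y hy => h i hi j hj x hx y hy

variable [GradedRing 𝒜]

lemma coe_decompose_eq_zero_of_mem_gradedPart {S : Set ℤ} {x : A} (hx : x ∈ gradedPart 𝒜 S)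
    {i : ℤ} (hi : i ∉ S) : (decompose 𝒜 x i : A) = 0 := by
  suffices gradedPart 𝒜 S ≤ (GradedRing.proj 𝒜 i).ker from this hx
  exact iSup₂_le fun k hk y hy => decompose_of_mem_ne 𝒜 hy fun hki => hi (hki ▸ hk)

lemma isCompl_gradedPart_compl (S : Set ℤ) : IsCompl (gradedPart 𝒜 S) (gradedPart 𝒜 Sᶜ) := by
  classical
  constructor
  · refine AddSubgroup.disjoint_def.mpr fun {x} hS hT => (decompose 𝒜).injective ?_
    ext i
    by_cases hi : i ∈ S
    · simpa using coe_decompose_eq_zero_of_mem_gradedPart 𝒜 hT (Set.notMem_compl_iff.mpr hi)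
    · simpa using coe_decompose_eq_zero_of_mem_gradedPart 𝒜 hS hi
  · refine codisjoint_iff.mpr (eq_top_iff.mpr fun x _ => ?_)
    rw [← sum_support_decompose 𝒜 x]
    refine sum_mem fun i _ => ?_
    by_cases hi : i ∈ S
    · exact AddSubgroup.mem_sup_left (mem_gradedPart_of_mem 𝒜 hi (decompose 𝒜 x i).2)
    · exact AddSubgroup.mem_sup_right (mem_gradedPart_of_mem 𝒜 hi (decompose 𝒜 x i).2)

lemma mul_mem_gradedPart_nonneg {x y : A} (hx : x ∈ gradedPart 𝒜 {i | 0 ≤ i})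
    (hy : y ∈ gradedPart 𝒜 {i | 0 ≤ i}) : x * y ∈ gradedPart 𝒜 {i | 0 ≤ i} :=
  mul_mem_gradedPart 𝒜 (fun _ hi _ hj _ hx _ hy =>
    mem_gradedPart_nonneg 𝒜 (add_nonneg hi hj) (SetLike.mul_mem_graded hx hy)) hx hy

lemma pow_mul_mem_graded {r x : A} {d i : ℤ} (hr : r ∈ 𝒜 d) (hx : x ∈ 𝒜 i) (n : ℕ) :
    r ^ n * x ∈ 𝒜 (n * d + i) := by
  simpa only [nsmul_eq_mul] using SetLike.mul_mem_graded (SetLike.pow_mem_graded n hr) hx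

end GradedPart

section RegularElements

lemma eq_zero_of_pow_mul_eq_zero {M : Type*} [MonoidWithZero M] {N : Set M} {r : M}
    (hN : ∀ a ∈ N, r * a ∈ N) (hreg : ∀ a ∈ N, r * a = 0 → a = 0) (n : ℕ) {a : M}
    (ha : a ∈ N) (h : r ^ n * a = 0) : a = 0 := by
  induction n generalizing a with
  | zero => simpa using h
  | succ n ih =>
    rw [pow_succ, mul_assoc] at h
    exact hreg a ha (ih (hN a ha) h)

lemma exists_eq_mul_of_pow_mul_eq_mul {M : Type*} [Monoid M] {N : Set M} {r rt : M}
    (hN : ∀ a ∈ N, rt * a ∈ N)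
    (hreg : ∀ a ∈ N, (∃ b ∈ N, rt * a = r * b) → ∃ c ∈ N, a = r * c) (n : ℕ) {a : M}
    (ha : a ∈ N) (h : ∃ b ∈ N, rt ^ n * a = r * b) : ∃ c ∈ N, a = r * c := by
  induction n generalizing a with
  | zero => simpa using h
  | succ n ih =>
    simp only [pow_succ, mul_assoc] at h
    exact hreg a ha (ih (hN a ha) h)

end RegularElements

section RegularSequence

variable {A : Type} [Ring A] (𝒜 : ℤ → AddSubgroup A) [GradedRing 𝒜] {r rt : A} {d dt : ℤ}

lemma eq_zero_of_eq_mul_of_lt {u c : A} {e : ℤ} (hu : u ∈ 𝒜 e) (hr : r ∈ 𝒜 d)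
    (hc : c ∈ gradedPart 𝒜 {i | 0 ≤ i}) (he : e < d) (h : u = r * c) : u = 0 := by
  calc u = decompose 𝒜 u e := (decompose_of_mem_same 𝒜 hu).symm
    _ = decompose 𝒜 (r * c) (d + (e - d)) := by rw [h, add_sub_cancel]
    _ = r * decompose 𝒜 c (e - d) := coe_decompose_mul_add_of_left_mem 𝒜 hr
    _ = 0 := by
      rw [coe_decompose_eq_zero_of_mem_gradedPart 𝒜 hc (by simpa using he), mul_zero]

lemma pow_succ_mul_eq_zero (hd : 0 < d) (hdt : 0 < dt) (hr : r ∈ 𝒜 d) (hrt : rt ∈ 𝒜 dt)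
    (hcr : ∀ x : A, r * x = x * r)
    (hreg2 : ∀ a ∈ gradedPart 𝒜 {i | 0 ≤ i},
      (∃ b ∈ gradedPart 𝒜 {i | 0 ≤ i}, rt * a = r * b) →
      ∃ c ∈ gradedPart 𝒜 {i | 0 ≤ i}, a = r * c)
    {j : ℤ} {b : A} (hb : b ∈ 𝒜 j) {p : ℕ} (hlt : p * d + j < 0) (hle : 0 ≤ p * d + j + d) :
    r ^ (p + 1) * b = 0 := by
  have hpd : (0 : ℤ) ≤ p * d := by positivity
  have hq : (j.natAbs : ℤ) = -j := by omega
  have hu : r ^ (p + 1) * b ∈ 𝒜 (p * d + j + d) := by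
    convert pow_mul_mem_graded 𝒜 hr hb (p + 1) using 2
    push_cast
    ring
  have hc : r ^ p * (rt ^ j.natAbs * b) ∈ gradedPart 𝒜 {i | 0 ≤ i} :=
    mem_gradedPart_nonneg 𝒜 (by nlinarith)
      (pow_mul_mem_graded 𝒜 hr (pow_mul_mem_graded 𝒜 hrt hb _) p)
  have hrtu : rt ^ j.natAbs * (r ^ (p + 1) * b) = r * (r ^ p * (rt ^ j.natAbs * b)) := by
    rw [← mul_assoc, ← (Commute.pow_pow (hcr rt) (p + 1) j.natAbs).eq, pow_succ']
    simp only [mul_assoc]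
  have hrtN : ∀ a ∈ gradedPart 𝒜 {i | 0 ≤ i}, rt * a ∈ gradedPart 𝒜 {i | 0 ≤ i} :=
    fun _ => mul_mem_gradedPart_nonneg 𝒜 (mem_gradedPart_nonneg 𝒜 hdt.le hrt)
  obtain ⟨c, hc', hu_eq⟩ := exists_eq_mul_of_pow_mul_eq_mul hrtN hreg2 j.natAbs
    (mem_gradedPart_nonneg 𝒜 hle hu) ⟨_, hc, hrtu⟩
  exact eq_zero_of_eq_mul_of_lt 𝒜 hu hr hc' (by linarith) hu_eq

lemma pow_mul_eq_zero_of_nonneg (hd : 0 < d) (hdt : 0 < dt) (hr : r ∈ 𝒜 d) (hrt : rt ∈ 𝒜 dt)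
    (hcr : ∀ x : A, r * x = x * r)
    (hreg2 : ∀ a ∈ gradedPart 𝒜 {i | 0 ≤ i},
      (∃ b ∈ gradedPart 𝒜 {i | 0 ≤ i}, rt * a = r * b) →
      ∃ c ∈ gradedPart 𝒜 {i | 0 ≤ i}, a = r * c)
    {j : ℤ} (hj : j < 0) {b : A} (hb : b ∈ 𝒜 j) (p : ℕ) (hp : 0 ≤ p * d + j) :
    r ^ p * b = 0 := by
  induction p with
  | zero => simp only [Nat.cast_zero, zero_mul, zero_add] at hp; omega
  | succ p ih =>
    push_cast at hp
    by_cases hlt : p * d + j < 0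
    · exact pow_succ_mul_eq_zero 𝒜 hd hdt hr hrt hcr hreg2 hb hlt (by linarith)
    · rw [pow_succ', mul_assoc, ih (by linarith), mul_zero]

lemma mul_mem_gradedPart_neg (hd : 0 < d) (hdt : 0 < dt) (hr : r ∈ 𝒜 d) (hrt : rt ∈ 𝒜 dt)
    (hcr : ∀ x : A, r * x = x * r)
    (hreg1 : ∀ a ∈ gradedPart 𝒜 {i | 0 ≤ i}, r * a = 0 → a = 0)
    (hreg2 : ∀ a ∈ gradedPart 𝒜 {i | 0 ≤ i},
      (∃ b ∈ gradedPart 𝒜 {i | 0 ≤ i}, rt * a = r * b) →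
      ∃ c ∈ gradedPart 𝒜 {i | 0 ≤ i}, a = r * c)
    {m j : ℤ} {a b : A} (ha : a ∈ 𝒜 m) (hb : b ∈ 𝒜 j) (hj : j < 0) :
    a * b ∈ gradedPart 𝒜 {i | i < 0} ∧ b * a ∈ gradedPart 𝒜 {i | i < 0} := by
  by_cases hmj : m + j < 0
  · exact ⟨mem_gradedPart_of_mem 𝒜 (S := {i | i < 0}) hmj (SetLike.mul_mem_graded ha hb),
      mem_gradedPart_of_mem 𝒜 (S := {i | i < 0}) (show j + m < 0 by omega)
        (SetLike.mul_mem_graded hb ha)⟩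
  have hrb : r ^ j.natAbs * b = 0 :=
    pow_mul_eq_zero_of_nonneg 𝒜 hd hdt hr hrt hcr hreg2 hj hb _ (by
      have : (j.natAbs : ℤ) = -j := by omega
      nlinarith)
  have hrN : ∀ x ∈ gradedPart 𝒜 {i | 0 ≤ i}, r * x ∈ gradedPart 𝒜 {i | 0 ≤ i} :=
    fun _ => mul_mem_gradedPart_nonneg 𝒜 (mem_gradedPart_nonneg 𝒜 hd.le hr)
  have hcancel : ∀ x ∈ 𝒜 (m + j), r ^ j.natAbs * x = 0 → x = 0 := fun x hx =>
    eq_zero_of_pow_mul_eq_zero hrN hreg1 _ (mem_gradedPart_nonneg 𝒜 (by omega) hx)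
  have hab : a * b = 0 := hcancel _ (SetLike.mul_mem_graded ha hb) (by
    rw [← mul_assoc, (Commute.pow_left (hcr a) _).eq, mul_assoc, hrb, mul_zero])
  have hba : b * a = 0 := hcancel _ (add_comm j m ▸ SetLike.mul_mem_graded hb ha) (by
    rw [← mul_assoc, hrb, zero_mul])
  rw [hab, hba]
  exact ⟨zero_mem _, zero_mem _⟩

end RegularSequence

theorem decomposition_as_bimodules_general {A : Type} [Ring A]
    (𝒜 : ℤ → AddSubgroup A) [GradedRing 𝒜]
    (r rt : A) (d dt : ℤ) (hd : 0 < d) (hdt : 0 < dt)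
    (hr : r ∈ 𝒜 d) (hrt : rt ∈ 𝒜 dt)
    (hcr : ∀ x : A, r * x = x * r)
    (hreg1 : ∀ a ∈ gradedPart 𝒜 {i | 0 ≤ i}, r * a = 0 → a = 0)
    (hreg2 : ∀ a ∈ gradedPart 𝒜 {i | 0 ≤ i},
      (∃ b ∈ gradedPart 𝒜 {i | 0 ≤ i}, rt * a = r * b) →
      ∃ c ∈ gradedPart 𝒜 {i | 0 ≤ i}, a = r * c) :
    -- `A^{<0}` is an `A^{≥0}`-subbimodule of `A`
    (∀ a ∈ gradedPart 𝒜 {i | 0 ≤ i}, ∀ b ∈ gradedPart 𝒜 {i | i < 0},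
      a * b ∈ gradedPart 𝒜 {i | i < 0} ∧ b * a ∈ gradedPart 𝒜 {i | i < 0}) ∧
    -- `A = A^{≥0} ⊕ A^{<0}` as additive groups
    (∀ x : A, ∃ y ∈ gradedPart 𝒜 {i | 0 ≤ i}, ∃ z ∈ gradedPart 𝒜 {i | i < 0},
      x = y + z) ∧
    (∀ y ∈ gradedPart 𝒜 {i | 0 ≤ i}, ∀ z ∈ gradedPart 𝒜 {i | i < 0},
      y + z = 0 → y = 0 ∧ z = 0) := by
  have hcompl := isCompl_gradedPart_compl 𝒜 {i : ℤ | 0 ≤ i}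
  rw [show {i : ℤ | 0 ≤ i}ᶜ = {i | i < 0} by ext; simp] at hcompl
  have hneg {m j : ℤ} {a b : A} (ha : a ∈ 𝒜 m) (hb : b ∈ 𝒜 j) (hj : j < 0) :=
    mul_mem_gradedPart_neg 𝒜 hd hdt hr hrt hcr hreg1 hreg2 ha hb hj
  refine ⟨fun a ha b hb => ⟨?_, ?_⟩, fun x => ?_, fun y hy z hz hyz => ?_⟩
  · exact mul_mem_gradedPart 𝒜 (fun _ _ _ hj _ ha _ hb => (hneg ha hb hj).1) ha hb
  · exact mul_mem_gradedPart 𝒜 (fun _ hj _ _ _ hb _ ha => (hneg ha hb hj).2) hb ha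
  · obtain ⟨y, hy, z, hz, rfl⟩ :=
      AddSubgroup.mem_sup.mp (hcompl.sup_eq_top ▸ AddSubgroup.mem_top x)
    exact ⟨y, hy, z, hz, rfl⟩
  · have hy0 : y = 0 := AddSubgroup.disjoint_def.mp hcompl.disjoint hy
      (eq_neg_of_add_eq_zero_left hyz ▸ neg_mem hz)
    exact ⟨hy0, by simpa [hy0] using hyz⟩

/-- If the non-negative part `A^{≥0}` of a `ℤ`-graded ring `A` admits a
regular sequence `(r, r̃)` of central homogeneous elements of positive degree, then
`A ≅ A^{≥0} ⊕ A^{<0}` as `A^{≥0}`-bimodules: both `A^{≥0}` and `A^{<0}` are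
`A^{≥0}`-subbimodules of `A` (so `A^{<0}` is simultaneously a subbimodule and, via the
resulting projection, a quotient bimodule of `A`), and `A` is their internal direct sum. -/
theorem decomposition_as_bimodules {A : Type} [Ring A]
    (𝒜 : ℤ → AddSubgroup A) [GradedRing 𝒜]
    (r rt : A) (d dt : ℤ) (hd : 0 < d) (hdt : 0 < dt)
    (hr : r ∈ 𝒜 d) (hrt : rt ∈ 𝒜 dt)
    (hcr : ∀ x : A, r * x = x * r) (hcrt : ∀ x : A, rt * x = x * rt)
    (hreg1 : ∀ a ∈ gradedPart 𝒜 {i | 0 ≤ i}, r * a = 0 → a = 0)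
    (hreg2 : ∀ a ∈ gradedPart 𝒜 {i | 0 ≤ i},
      (∃ b ∈ gradedPart 𝒜 {i | 0 ≤ i}, rt * a = r * b) →
      ∃ c ∈ gradedPart 𝒜 {i | 0 ≤ i}, a = r * c) :
    -- `A^{<0}` is an `A^{≥0}`-subbimodule of `A`
    (∀ a ∈ gradedPart 𝒜 {i | 0 ≤ i}, ∀ b ∈ gradedPart 𝒜 {i | i < 0},
      a * b ∈ gradedPart 𝒜 {i | i < 0} ∧ b * a ∈ gradedPart 𝒜 {i | i < 0}) ∧
    -- `A = A^{≥0} ⊕ A^{<0}` as additive groups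
    (∀ x : A, ∃ y ∈ gradedPart 𝒜 {i | 0 ≤ i}, ∃ z ∈ gradedPart 𝒜 {i | i < 0},
      x = y + z) ∧
    (∀ y ∈ gradedPart 𝒜 {i | 0 ≤ i}, ∀ z ∈ gradedPart 𝒜 {i | i < 0},
      y + z = 0 → y = 0 ∧ z = 0) :=
  decomposition_as_bimodules_general 𝒜 r rt d dt hd hdt hr hrt hcr hreg1 hreg2
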